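/- arXiv:1412.0537 — 6 statements merged into one kernel-verified Lean document; each statement's English description precedes it below -/
import Mathlib

section
/- If σ1 and σ2 are copyless substitutions (each variable occurs at most once in the union of the images σ(X) over X ∈ X), then their composition σ1 σ2 is also copyless. -/
/-! The number of occurrences of `y` in the images of `σ₁ σ₂` is
`∑ z, (number of z in the images of σ₂) * (number of y in σ₁ z)`. Copylessness of `σ₂` bounds
the first factor by `1`, leaving at most the number of `y` in the images of `σ₁`, which is `≤ 1`. -/

namespace SSTPaper

/-- Homomorphic extension of a substitution, fixing output letters. -/
def ext {X Γ : Type} (σ : X → List (Γ ⊕ X)) : List (Γ ⊕ X) → List (Γ ⊕ X) :=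
  fun w => w.flatMap (Sum.elim (fun g => [Sum.inl g]) σ)

/-- Composition of substitutions: (σ1 σ2)(x) = σ̂1(σ2 x). -/
def comp {X Γ : Type} (σ1 σ2 : X → List (Γ ⊕ X)) : X → List (Γ ⊕ X) :=
  fun x => ext σ1 (σ2 x)

/-- The identity substitution. -/
def idSubst {X Γ : Type} : X → List (Γ ⊕ X) := fun x => [Sum.inr x]

end SSTPaper

namespace SSTPaper

/-- A substitution is copyless if every variable occurs at most once in the
    concatenation of the images σ(x) over all variables x. -/
def Copyless {X Γ : Type} [Fintype X] [DecidableEq X] [DecidableEq Γ]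
    (σ : X → List (Γ ⊕ X)) : Prop :=
  ∀ y : X, ∑ x : X, (σ x).count (Sum.inr y) ≤ 1

-- `Sum`'s `BEq` instance is not `LawfulBEq`, so `simp` needs these to evaluate `List.count`.
theorem inl_beq_inr {X Γ : Type} [BEq X] [BEq Γ] (g : Γ) (x : X) :
    ((Sum.inl g : Γ ⊕ X) == Sum.inr x) = false := rfl

theorem inr_beq_inr {X Γ : Type} [BEq X] [BEq Γ] (x z : X) :
    ((Sum.inr x : Γ ⊕ X) == Sum.inr z) = (x == z) := rfl

section Counting

variable {X Γ : Type} [Fintype X] [DecidableEq X] [DecidableEq Γ]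

theorem count_inr_ext (σ : X → List (Γ ⊕ X)) (y : X) (w : List (Γ ⊕ X)) :
    (ext σ w).count (Sum.inr y) =
      ∑ z : X, w.count (Sum.inr z) * (σ z).count (Sum.inr y) := by
  induction w with
  | nil => simp [ext]
  | cons a w ih =>
    have ext_cons : ext σ (a :: w) = Sum.elim (fun g => [Sum.inl g]) σ a ++ ext σ w := rfl
    rw [ext_cons, List.count_append, ih]
    cases a with
    | inl g => simp [List.count_cons, inl_beq_inr]
    | inr x => simp [List.count_cons, inr_beq_inr, add_mul, Finset.sum_add_distrib, add_comm]

theorem sum_count_inr_comp (σ₁ σ₂ : X → List (Γ ⊕ X)) (y : X) :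
    ∑ x : X, (comp σ₁ σ₂ x).count (Sum.inr y) =
      ∑ z : X, (∑ x : X, (σ₂ x).count (Sum.inr z)) * (σ₁ z).count (Sum.inr y) := by
  simp only [comp, count_inr_ext, Finset.sum_mul]
  exact Finset.sum_comm

end Counting

/-- The composition of two copyless substitutions is copyless. -/
theorem copyless_comp {X Γ : Type} [Fintype X] [DecidableEq X] [DecidableEq Γ]
    (σ₁ σ₂ : X → List (Γ ⊕ X)) (h₁ : Copyless σ₁) (h₂ : Copyless σ₂) :
    Copyless (comp σ₁ σ₂) := by
  intro y
  calc ∑ x : X, (comp σ₁ σ₂ x).count (Sum.inr y)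
      = ∑ z : X, (∑ x : X, (σ₂ x).count (Sum.inr z)) * (σ₁ z).count (Sum.inr y) :=
        sum_count_inr_comp σ₁ σ₂ y
    _ ≤ ∑ z : X, 1 * (σ₁ z).count (Sum.inr y) :=
        Finset.sum_le_sum fun z _ => Nat.mul_le_mul_right _ (h₂ z)
    _ = ∑ z : X, (σ₁ z).count (Sum.inr y) := by simp only [one_mul]
    _ ≤ 1 := h₁ y

end SSTPaper
end

section
/- The relation defined by the synchronized product of two nondeterministic SSTs T1 and T2 is exactly the set of pairs (w, (w1, w2)) such that (w, w1) ∈ ⟦T1⟧ and (w, w2) ∈ ⟦T2⟧. -/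
namespace SSTPaper

/-- Erase variables and keep output letters, after applying σ to a variable word:
    this computes σ_ε σ (xs). -/
def evalOut {X Γ : Type} (σ : X → List (Γ ⊕ X)) (xs : List X) : List Γ :=
  (xs.flatMap σ).filterMap (Sum.elim some (fun _ => none))

/-- Nondeterministic streaming string transducer. -/
structure NSST (S Γ Q X : Type) where
  init : Q
  final : Q → Prop
  delta : Q → S → Q → Prop
  rho : Q → S → Q → X → List (Γ ⊕ X)
  out : Q → List X

/-- Nondeterministic biSST: like an SST but outputs a pair of variable words. -/
structure BiSST (S Γ Q X : Type) where
  init : Q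
  final : Q → Prop
  delta : Q → S → Q → Prop
  rho : Q → S → Q → X → List (Γ ⊕ X)
  out : Q → List X × List X

/-- Runs of an SST, together with the induced substitution
    σ_r = ρ(t₁) ρ(t₂) ⋯ ρ(t_n) (left-to-right composition). -/
inductive Run {S Γ Q X : Type} (T : NSST S Γ Q X) :
    Q → List S → Q → (X → List (Γ ⊕ X)) → Prop
  | nil (q : Q) : Run T q [] q idSubst
  | cons {q q' q'' : Q} {a : S} {w : List S} {σ : X → List (Γ ⊕ X)} :
      T.delta q a q' → Run T q' w q'' σ →
      Run T q (a :: w) q'' (comp (T.rho q a q') σ)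

/-- Runs of a biSST, with induced substitution. -/
inductive BiRun {S Γ Q X : Type} (T : BiSST S Γ Q X) :
    Q → List S → Q → (X → List (Γ ⊕ X)) → Prop
  | nil (q : Q) : BiRun T q [] q idSubst
  | cons {q q' q'' : Q} {a : S} {w : List S} {σ : X → List (Γ ⊕ X)} :
      T.delta q a q' → BiRun T q' w q'' σ →
      BiRun T q (a :: w) q'' (comp (T.rho q a q') σ)

/-- The relation ⟦T⟧ ⊆ Σ* × Γ* defined by a nondeterministic SST. -/
def NSST.Rel {S Γ Q X : Type} (T : NSST S Γ Q X) (w : List S) (o : List Γ) : Prop :=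
  ∃ q σ, Run T T.init w q σ ∧ T.final q ∧ o = evalOut σ (T.out q)

/-- The relation defined by a biSST (input, pair of outputs). -/
def BiSST.Rel {S Γ Q X : Type} (T : BiSST S Γ Q X) (w : List S)
    (o : List Γ × List Γ) : Prop :=
  ∃ q σ, BiRun T T.init w q σ ∧ T.final q ∧
    o.1 = evalOut σ (T.out q).1 ∧ o.2 = evalOut σ (T.out q).2

/-- Domain of an SST. -/
def NSST.Dom {S Γ Q X : Type} (T : NSST S Γ Q X) : Set (List S) :=
  {w | ∃ o, T.Rel w o}

/-- Domain of a biSST. -/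
def BiSST.Dom {S Γ Q X : Type} (T : BiSST S Γ Q X) : Set (List S) :=
  {w | ∃ o, T.Rel w o}

/-- A biSST is diagonal if every output pair has equal components. -/
def BiSST.Diagonal {S Γ Q X : Type} (T : BiSST S Γ Q X) : Prop :=
  ∀ w o₁ o₂, T.Rel w (o₁, o₂) → o₁ = o₂

/-- A nondeterministic SST is functional if it defines a partial function. -/
def NSST.Functional {S Γ Q X : Type} (T : NSST S Γ Q X) : Prop :=
  ∀ w o₁ o₂, T.Rel w o₁ → T.Rel w o₂ → o₁ = o₂

/-- Determinism of a transition relation. -/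
def DetRel {Q S : Type} (δ : Q → S → Q → Prop) : Prop :=
  ∀ q a q₁ q₂, δ q a q₁ → δ q a q₂ → q₁ = q₂

/-- Rename variables inside a word over Γ ∪ X. -/
def mapV {Γ X X' : Type} (f : X → X') : List (Γ ⊕ X) → List (Γ ⊕ X') :=
  List.map (Sum.map id f)

/-- Synchronized product of two nondeterministic SSTs, as a biSST. -/
def prodSST {S Γ Q₁ Q₂ X₁ X₂ : Type} (T₁ : NSST S Γ Q₁ X₁) (T₂ : NSST S Γ Q₂ X₂) :
    BiSST S Γ (Q₁ × Q₂) (X₁ ⊕ X₂) where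
  init := (T₁.init, T₂.init)
  final := fun p => T₁.final p.1 ∧ T₂.final p.2
  delta := fun p a p' => T₁.delta p.1 a p'.1 ∧ T₂.delta p.2 a p'.2
  rho := fun p a p' =>
    Sum.elim (fun x₁ => mapV Sum.inl (T₁.rho p.1 a p'.1 x₁))
             (fun x₂ => mapV Sum.inr (T₂.rho p.2 a p'.2 x₂))
  out := fun p => ((T₁.out p.1).map Sum.inl, (T₂.out p.2).map Sum.inr)

end SSTPaper

namespace SSTPaper

/-! Runs of `T₁ ⊗ T₂` are exactly pairs of runs of `T₁` and `T₂` on the same input, and the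
substitution of such a run is the pairing of the two factors' substitutions: pairing commutes
with composition because each side only rewrites its own copy of the variables, and erasing
variables from a pairing applied to a renamed output word of one factor gives that factor's
output. -/

/-- `(prodSST T₁ T₂).rho p a p'` is `pairSubst (T₁.rho p.1 a p'.1) (T₂.rho p.2 a p'.2)`. -/
def pairSubst {Γ X₁ X₂ : Type} (σ₁ : X₁ → List (Γ ⊕ X₁)) (σ₂ : X₂ → List (Γ ⊕ X₂)) :
    X₁ ⊕ X₂ → List (Γ ⊕ (X₁ ⊕ X₂)) :=
  Sum.elim (fun x => mapV Sum.inl (σ₁ x)) (fun x => mapV Sum.inr (σ₂ x))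

section Renaming

variable {Γ X Y : Type} {f : X → Y} {σ : X → List (Γ ⊕ X)} {τ : Y → List (Γ ⊕ Y)}

theorem ext_mapV (h : ∀ x, τ (f x) = mapV f (σ x)) (w : List (Γ ⊕ X)) :
    ext τ (mapV f w) = mapV f (ext σ w) := by
  induction w with
  | nil => rfl
  | cons a w ih =>
    cases a <;> simp_all [ext, mapV]

theorem filterMap_letters_mapV (f : X → Y) (w : List (Γ ⊕ X)) :
    (mapV f w).filterMap (Sum.elim some fun _ => none) =
      w.filterMap (Sum.elim some fun _ => none) := by
  rw [mapV, List.filterMap_map]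
  congr 1
  funext a
  cases a <;> rfl

theorem evalOut_map (h : ∀ x, τ (f x) = mapV f (σ x)) (xs : List X) :
    evalOut τ (xs.map f) = evalOut σ xs := by
  have : (xs.map f).flatMap τ = mapV f (xs.flatMap σ) := by
    simp only [List.flatMap_map, h, mapV, List.map_flatMap]
  rw [evalOut, this, filterMap_letters_mapV, evalOut]

end Renaming

section Pairing

variable {Γ X₁ X₂ : Type}

theorem pairSubst_idSubst :
    pairSubst (idSubst (Γ := Γ) (X := X₁)) (idSubst (X := X₂)) = idSubst := by
  funext x
  cases x <;> rfl

theorem comp_pairSubst (ρ₁ σ₁ : X₁ → List (Γ ⊕ X₁)) (ρ₂ σ₂ : X₂ → List (Γ ⊕ X₂)) :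
    comp (pairSubst ρ₁ ρ₂) (pairSubst σ₁ σ₂) = pairSubst (comp ρ₁ σ₁) (comp ρ₂ σ₂) := by
  funext x
  cases x with
  | inl x => exact ext_mapV (τ := pairSubst ρ₁ ρ₂) (σ := ρ₁) (fun _ => rfl) (σ₁ x)
  | inr x => exact ext_mapV (τ := pairSubst ρ₁ ρ₂) (σ := ρ₂) (fun _ => rfl) (σ₂ x)

theorem evalOut_pairSubst_inl (σ₁ : X₁ → List (Γ ⊕ X₁)) (σ₂ : X₂ → List (Γ ⊕ X₂))
    (xs : List X₁) : evalOut (pairSubst σ₁ σ₂) (xs.map Sum.inl) = evalOut σ₁ xs :=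
  evalOut_map (τ := pairSubst σ₁ σ₂) (fun _ => rfl) xs

theorem evalOut_pairSubst_inr (σ₁ : X₁ → List (Γ ⊕ X₁)) (σ₂ : X₂ → List (Γ ⊕ X₂))
    (xs : List X₂) : evalOut (pairSubst σ₁ σ₂) (xs.map Sum.inr) = evalOut σ₂ xs :=
  evalOut_map (τ := pairSubst σ₁ σ₂) (fun _ => rfl) xs

end Pairing

section Product

variable {S Γ Q₁ Q₂ X₁ X₂ : Type} {T₁ : NSST S Γ Q₁ X₁} {T₂ : NSST S Γ Q₂ X₂}

theorem BiRun.exists_runs_of_prodSST {w : List S} {p p' : Q₁ × Q₂}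
    {σ : X₁ ⊕ X₂ → List (Γ ⊕ (X₁ ⊕ X₂))} (h : BiRun (prodSST T₁ T₂) p w p' σ) :
    ∃ σ₁ σ₂, σ = pairSubst σ₁ σ₂ ∧ Run T₁ p.1 w p'.1 σ₁ ∧ Run T₂ p.2 w p'.2 σ₂ := by
  induction h with
  | nil q => exact ⟨idSubst, idSubst, pairSubst_idSubst.symm, .nil _, .nil _⟩
  | cons hδ _ ih =>
    obtain ⟨σ₁, σ₂, rfl, hrun₁, hrun₂⟩ := ih
    exact ⟨_, _, comp_pairSubst _ _ _ _, .cons hδ.1 hrun₁, .cons hδ.2 hrun₂⟩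

theorem BiRun.prodSST_of_runs {w : List S} {q₁ q₁' : Q₁} {q₂ q₂' : Q₂}
    {σ₁ : X₁ → List (Γ ⊕ X₁)} {σ₂ : X₂ → List (Γ ⊕ X₂)}
    (hrun₁ : Run T₁ q₁ w q₁' σ₁) (hrun₂ : Run T₂ q₂ w q₂' σ₂) :
    BiRun (prodSST T₁ T₂) (q₁, q₂) w (q₁', q₂') (pairSubst σ₁ σ₂) := by
  induction hrun₁ generalizing q₂ σ₂ with
  | nil =>
    cases hrun₂
    rw [pairSubst_idSubst]
    exact .nil _
  | cons hδ₁ _ ih =>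
    cases hrun₂ with
    | cons hδ₂ hrun₂ =>
      rw [← comp_pairSubst]
      exact .cons (q' := (_, _)) ⟨hδ₁, hδ₂⟩ (ih hrun₂)

end Product

/-- ⟦T₁ ⊗ T₂⟧ = {(w, (w₁, w₂)) : (w, w₁) ∈ ⟦T₁⟧ and (w, w₂) ∈ ⟦T₂⟧}. -/
theorem prod_rel {S Γ Q₁ Q₂ X₁ X₂ : Type}
    (T₁ : NSST S Γ Q₁ X₁) (T₂ : NSST S Γ Q₂ X₂) :
    ∀ (w : List S) (w₁ w₂ : List Γ),
      (prodSST T₁ T₂).Rel w (w₁, w₂) ↔ T₁.Rel w w₁ ∧ T₂.Rel w w₂ := by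
  intro w w₁ w₂
  constructor
  · rintro ⟨q, σ, hrun, ⟨hfin₁, hfin₂⟩, hout₁, hout₂⟩
    obtain ⟨σ₁, σ₂, rfl, hrun₁, hrun₂⟩ := hrun.exists_runs_of_prodSST
    exact ⟨⟨q.1, σ₁, hrun₁, hfin₁, hout₁.trans (evalOut_pairSubst_inl σ₁ σ₂ _)⟩,
      ⟨q.2, σ₂, hrun₂, hfin₂, hout₂.trans (evalOut_pairSubst_inr σ₁ σ₂ _)⟩⟩
  · rintro ⟨⟨q₁, σ₁, hrun₁, hfin₁, hout₁⟩, ⟨q₂, σ₂, hrun₂, hfin₂, hout₂⟩⟩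
    exact ⟨(q₁, q₂), pairSubst σ₁ σ₂, .prodSST_of_runs hrun₁ hrun₂, ⟨hfin₁, hfin₂⟩,
      hout₁.trans (evalOut_pairSubst_inl σ₁ σ₂ _).symm,
      hout₂.trans (evalOut_pairSubst_inr σ₁ σ₂ _).symm⟩

end SSTPaper
end

section
/- Given an HDT0L instance I = (A, B, h1,…,hn, h, g1,…,gn, g, v, w), the two deterministic SSTs T1 and T2 constructed from I (over input alphabet {0,1,…,n}, variables {X_a : a ∈ A}, with initial transition on letter 0 setting X_a := h(a) (resp. g(a)) and loop transitions on letter i setting X_a := rename(h_i(a)) (resp. rename(g_i(a))), and outputs rename(v), rename(w)) satisfy: for every sequence i1,…,ik ∈ {1,…,n}, T1(0 i1 … ik) = h(h_{i1}(… h_{ik}(v)…)) and T2(0 i1 … ik) = g(g_{i1}(… g_{ik}(w)…)). -/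
namespace SSTPaper

/-- Apply a monoid morphism (given by its action on letters) to a word. -/
def mapply {A B : Type} (f : A → List B) (w : List A) : List B := w.flatMap f

/-- Value h(h_{i₁}( … h_{i_k}(v) … )) of an HDT0L instance on an index sequence. -/
def hdtVal {A B : Type} {n : ℕ} (hs : Fin n → A → List A) (h : A → List B)
    (l : List (Fin n)) (v : List A) : List B :=
  mapply h (l.foldr (fun i w => mapply (hs i) w) v)

/-- Validity of an HDT0L instance. -/
def HDT0LValid {A B : Type} {n : ℕ} (hs gs : Fin n → A → List A)
    (h g : A → List B) (v w : List A) : Prop :=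
  ∀ l : List (Fin n), hdtVal hs h l v = hdtVal gs g l w

end SSTPaper

namespace SSTPaper

/-- The SST constructed from (one side of) an HDT0L instance:
    states q₀ = false, q₁ = true, input alphabet {0} ∪ {1,…,n} modeled as
    Option (Fin n) (none is the letter 0), variables X_a for a ∈ A. -/
def hdtSST {A B : Type} {n : ℕ} (hs : Fin n → A → List A) (h : A → List B)
    (v : List A) : NSST (Option (Fin n)) B Bool A where
  init := false
  final := fun q => q = true
  delta := fun q s q' =>
    (q = false ∧ s = none ∧ q' = true) ∨ (q = true ∧ (∃ i, s = some i) ∧ q' = true)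
  rho := fun _ s _ =>
    match s with
    | none => fun a => (h a).map Sum.inl
    | some i => fun a => (hs i a).map Sum.inr
  out := fun _ => v

end SSTPaper

/-!
Reading `i` in `q₁` only renames variables, so a run on `i₁ ⋯ i_k` from `q₁` induces the
substitution `X_a ↦ rename(h_{i₁}(⋯ h_{i_k}(a) ⋯))`. Prefixing the letter `0` composes it with
`X_a ↦ h(a)`, which turns every variable into output letters, so the output `rename(v)` evaluates
to `h(h_{i₁}(⋯ h_{i_k}(v) ⋯))`.
-/

namespace SSTPaper

section Substitutions

variable {X Γ : Type}

lemma ext_map_inr (σ : X → List (Γ ⊕ X)) (u : List X) :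
    ext σ (u.map Sum.inr) = u.flatMap σ := by
  simp [ext, List.flatMap_map]

lemma comp_map_inr (σ : X → List (Γ ⊕ X)) (f : X → List X) :
    comp σ (fun x => (f x).map Sum.inr) = fun x => (f x).flatMap σ :=
  funext fun x => ext_map_inr σ (f x)

lemma evalOut_map_inl (k : X → List Γ) (xs : List X) :
    evalOut (fun x => (k x).map Sum.inl) xs = xs.flatMap k := by
  simp [evalOut, List.filterMap_flatMap, List.filterMap_map, Function.comp_def]

end Substitutions

section Runs

variable {S Γ Q X : Type} (T : NSST S Γ Q X)

lemma run_nil_iff {q q' : Q} {σ : X → List (Γ ⊕ X)} :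
    Run T q [] q' σ ↔ q' = q ∧ σ = idSubst := by
  constructor
  · rintro ⟨⟩
    exact ⟨rfl, rfl⟩
  · rintro ⟨rfl, rfl⟩
    exact .nil _

lemma run_cons_iff {q q'' : Q} {a : S} {w : List S} {σ : X → List (Γ ⊕ X)} :
    Run T q (a :: w) q'' σ ↔
      ∃ q' σ', T.delta q a q' ∧ Run T q' w q'' σ' ∧ σ = comp (T.rho q a q') σ' := by
  constructor
  · rintro (_ | ⟨hd, hr⟩)
    exact ⟨_, _, hd, hr, rfl⟩
  · rintro ⟨q', σ', hd, hr, rfl⟩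
    exact .cons hd hr

end Runs

section HDT0L

variable {A B : Type} {n : ℕ} (hs : Fin n → A → List A)

def iterMorph (l : List (Fin n)) (a : A) : List A :=
  l.foldr (fun i w => mapply (hs i) w) [a]

@[simp]
lemma iterMorph_nil (a : A) : iterMorph hs [] a = [a] := rfl

@[simp]
lemma iterMorph_cons (i : Fin n) (l : List (Fin n)) (a : A) :
    iterMorph hs (i :: l) a = (iterMorph hs l a).flatMap (hs i) := rfl

lemma foldr_mapply_eq_flatMap_iterMorph (l : List (Fin n)) (u : List A) :
    l.foldr (fun i w => mapply (hs i) w) u = u.flatMap (iterMorph hs l) := by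
  induction l generalizing u with
  | nil => exact (List.flatMap_singleton' u).symm
  | cons i l ih =>
    rw [List.foldr_cons, ih, mapply, List.flatMap_assoc]
    rfl

variable (h : A → List B) (v : List A)

@[simp]
lemma hdtSST_delta_none {q q' : Bool} :
    (hdtSST hs h v).delta q none q' ↔ q = false ∧ q' = true := by
  simp [hdtSST]

@[simp]
lemma hdtSST_delta_some {q q' : Bool} {i : Fin n} :
    (hdtSST hs h v).delta q (some i) q' ↔ q = true ∧ q' = true := by
  simp [hdtSST]

@[simp]
lemma hdtSST_rho_none {q q' : Bool} :
    (hdtSST hs h v).rho q none q' = fun a => (h a).map Sum.inl := rfl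

@[simp]
lemma hdtSST_rho_some {q q' : Bool} {i : Fin n} :
    (hdtSST hs h v).rho q (some i) q' = fun a => (hs i a).map Sum.inr := rfl

lemma hdtSST_run_loop_iff (l : List (Fin n)) (q : Bool) (σ : A → List (B ⊕ A)) :
    Run (hdtSST hs h v) true (l.map some) q σ ↔
      q = true ∧ σ = fun a => (iterMorph hs l a).map Sum.inr := by
  induction l generalizing σ with
  | nil => simp only [List.map_nil, run_nil_iff, iterMorph_nil]; rfl
  | cons i l ih =>
    simp [run_cons_iff, ih, comp_map_inr, List.map_flatMap]

lemma hdtSST_run_iff (l : List (Fin n)) (q : Bool) (σ : A → List (B ⊕ A)) :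
    Run (hdtSST hs h v) false (none :: l.map some) q σ ↔
      q = true ∧ σ = fun a => ((iterMorph hs l a).flatMap h).map Sum.inl := by
  simp [run_cons_iff, hdtSST_run_loop_iff, comp_map_inr, List.map_flatMap]

lemma hdtSST_rel_iff (l : List (Fin n)) (o : List B) :
    (hdtSST hs h v).Rel (none :: l.map some) o ↔ o = hdtVal hs h l v := by
  have hval : evalOut (fun a => ((iterMorph hs l a).flatMap h).map Sum.inl) v =
      hdtVal hs h l v := by
    rw [evalOut_map_inl, hdtVal, mapply, foldr_mapply_eq_flatMap_iterMorph, List.flatMap_assoc]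
  constructor
  · rintro ⟨q, σ, hrun, -, rfl⟩
    obtain ⟨rfl, rfl⟩ := (hdtSST_run_iff hs h v l q σ).1 hrun
    exact hval
  · rintro rfl
    exact ⟨true, _, (hdtSST_run_iff hs h v l _ _).2 ⟨rfl, rfl⟩, rfl, hval.symm⟩

end HDT0L

/-- The SSTs T₁ and T₂ built from an HDT0L instance compute
    T₁(0 i₁ … i_k) = h(h_{i₁}(… h_{i_k}(v) …)) and
    T₂(0 i₁ … i_k) = g(g_{i₁}(… g_{i_k}(w) …)). -/
theorem hdtSST_output {A B : Type} {n : ℕ}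
    (hs gs : Fin n → A → List A) (h g : A → List B) (v w : List A) :
    ∀ l : List (Fin n),
      (∀ o : List B, (hdtSST hs h v).Rel (none :: l.map some) o ↔ o = hdtVal hs h l v) ∧
      (∀ o : List B, (hdtSST gs g w).Rel (none :: l.map some) o ↔ o = hdtVal gs g l w) :=
  fun l => ⟨hdtSST_rel_iff hs h v l, hdtSST_rel_iff gs g w l⟩

end SSTPaper
end

section
/- For the HDT0L-to-SST construction, the substitution σ_r induced by the run of T1 on input 0 i1 … ik sends each variable X_a to h(h_{i1}(… h_{ik}(a)…)), for every a ∈ A. -/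
namespace SSTPaper

section Substitution

variable {X Γ : Type}

theorem ext_map_inr_eq_map_mapply {Y : Type} (f : X → List Y) (g : Y → Γ ⊕ X) (w : List X) :
    ext (fun x => (f x).map g) (w.map Sum.inr) = (mapply f w).map g := by
  simp [ext, mapply, List.flatMap_map, List.map_flatMap]

theorem foldr_comp_rename_apply {I : Type} (f : I → X → List X) (l : List I) (x : X) :
    l.foldr (fun i τ => comp (fun y => (f i y).map Sum.inr) τ) (idSubst : X → List (Γ ⊕ X)) x
      = (l.foldr (fun i w => mapply (f i) w) [x]).map Sum.inr := by
  induction l with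
  | nil => rfl
  | cons i l ih => exact (congrArg _ ih).trans (ext_map_inr_eq_map_mapply (f i) Sum.inr _)

theorem Run.subst_eq_foldr {S Q : Type} {T : NSST S Γ Q X} {ρ : S → X → List (Γ ⊕ X)}
    (hρ : ∀ q s q', T.rho q s q' = ρ s) {q q' : Q} {w : List S} {σ : X → List (Γ ⊕ X)}
    (hr : Run T q w q' σ) : σ = w.foldr (fun s τ => comp (ρ s) τ) idSubst := by
  induction hr with
  | nil => rfl
  | cons _ _ ih => rw [hρ, ih]; rfl

end Substitution

theorem hdtSST_rho {A B : Type} {n : ℕ} (hs : Fin n → A → List A) (h : A → List B)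
    (v : List A) (q : Bool) (s : Option (Fin n)) (q' : Bool) :
    (hdtSST hs h v).rho q s q'
      = s.elim (fun a => (h a).map Sum.inl) (fun i a => (hs i a).map Sum.inr) := by
  cases s <;> rfl

/-- The substitution induced by the run of T₁ on 0 i₁ … i_k sends each
    variable X_a to h(h_{i₁}(… h_{i_k}(a) …)). -/
theorem hdtSST_run_subst {A B : Type} {n : ℕ}
    (hs : Fin n → A → List A) (h : A → List B) (v : List A) :
    ∀ (l : List (Fin n)) (q : Bool) (σ : A → List (B ⊕ A)),
      Run (hdtSST hs h v) (hdtSST hs h v).init (none :: l.map some) q σ →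
      ∀ a : A, σ a = (hdtVal hs h l [a]).map Sum.inl := by
  intro l q σ hr a
  rw [Run.subst_eq_foldr (hdtSST_rho hs h v) hr, List.foldr_cons, List.foldr_map]
  simp only [Option.elim, comp, foldr_comp_rename_apply]
  exact ext_map_inr_eq_map_mapply h Sum.inl _

end SSTPaper
end

section
/- In the biSST-to-HDT0L reduction, for every sequence i1,…,ik over Qf ∪ δ that is not valid (i.e., it is not of the form t1,…,t_{k-1}, q with t1,…,t_{k-1} a run of T from q0 ending in the final state q = i_k), the morphism composition collapses to the empty word: f_{q0}(f_{i1}(… f_{ik}(#)…)) = ε, where f_{i} denotes f_{i}^1 or f_{i}^2 when i ∈ Qf and f_i when i ∈ δ. -/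
namespace SSTPaper

/-- Runs of a biSST recording the list of transitions used. -/
inductive BiRunL {S Γ Q X : Type} (T : BiSST S Γ Q X) :
    Q → List S → Q → List (Q × S × Q) → Prop
  | nil (q : Q) : BiRunL T q [] q []
  | cons {q q' q'' : Q} {a : S} {w : List S} {ts : List (Q × S × Q)} :
      T.delta q a q' → BiRunL T q' w q'' ts →
      BiRunL T q (a :: w) q'' ((q, a, q') :: ts)

/-- The substitution induced by a list of transitions of a biSST:
    σ = ρ(t₁) ρ(t₂) ⋯ ρ(t_n). -/
def bsubstOf {S Γ Q X : Type} (T : BiSST S Γ Q X) (ts : List (Q × S × Q)) :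
    X → List (Γ ⊕ X) :=
  ts.foldr (fun t σ => comp (T.rho t.1 t.2.1 t.2.2) σ) idSubst

end SSTPaper

namespace SSTPaper

/-- Base letters X ∪ Γ ∪ {$, #} of the HDT0L alphabet built from a biSST:
    `Sum.inr (Sum.inr false)` is $ and `Sum.inr (Sum.inr true)` is #. -/
abbrev BaseL (X Γ : Type) := X ⊕ Γ ⊕ Bool

/-- The HDT0L alphabet A = {α_q : α ∈ X ∪ Γ ∪ {$,#}, q ∈ Q} ∪ {#};
    `Sum.inr ()` is the unsubscripted letter #. -/
abbrev ALet (X Γ Q : Type) := (BaseL X Γ × Q) ⊕ Unit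

/-- The morphism subscript_q. -/
def subscr {X Γ Q : Type} (q : Q) (α : BaseL X Γ) : ALet X Γ Q := Sum.inl (α, q)

/-- The morphism f_q^i for a final state q; `i = true` selects the first
    component π₁(F(q)) and `i = false` the second. It sends # to
    subscript_q($ · π_i(F(q))) and everything else to ε. -/
def fFin {S Γ Q X : Type} (T : BiSST S Γ Q X) (q : Q) (i : Bool) :
    ALet X Γ Q → List (ALet X Γ Q) :=
  fun α => match α with
    | Sum.inr _ =>
        subscr q (Sum.inr (Sum.inr false)) ::
          (cond i (T.out q).1 (T.out q).2).map (fun x => subscr q (Sum.inl x))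
    | _ => []

/-- The morphism f_t for a transition t = (q, a, q'). -/
def fTr {S Γ Q X : Type} [DecidableEq Q] (T : BiSST S Γ Q X) (t : Q × S × Q) :
    ALet X Γ Q → List (ALet X Γ Q) :=
  fun α => match α with
    | Sum.inl (Sum.inl x, p) =>
        if p = t.2.2 then
          (T.rho t.1 t.2.1 t.2.2 x).map
            (fun l => subscr t.1 (Sum.elim (fun g => Sum.inr (Sum.inl g)) Sum.inl l))
        else []
    | Sum.inl (Sum.inr (Sum.inl g), p) =>
        if p = t.2.2 then [subscr t.1 (Sum.inr (Sum.inl g))] else []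
    | Sum.inl (Sum.inr (Sum.inr false), p) =>
        if p = t.2.2 then [subscr t.1 (Sum.inr (Sum.inr false))] else []
    | _ => []

/-- The final morphism f_{q₀} : A* → B* = Γ*. -/
def fOut {S Γ Q X : Type} [DecidableEq Q] (T : BiSST S Γ Q X) :
    ALet X Γ Q → List Γ :=
  fun α => match α with
    | Sum.inl (Sum.inr (Sum.inl g), p) => if p = T.init then [g] else []
    | _ => []

end SSTPaper

namespace SSTPaper

variable {S Γ Q X : Type}

/-- An element of the index set Q_f ∪ δ of the HDT0L instance I_T. -/
def IdxEl (T : BiSST S Γ Q X) : Type :=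
  {q : Q // T.final q} ⊕ {t : Q × S × Q // T.delta t.1 t.2.1 t.2.2}

/-- The morphism associated with an index element: f_q^i (with `i = true`
    for f_q^1 and `i = false` for f_q^2) for a final state, f_t for a
    transition. -/
def idxMorph [DecidableEq Q] (T : BiSST S Γ Q X) (i : Bool) (e : IdxEl T) :
    ALet X Γ Q → List (ALet X Γ Q) :=
  Sum.elim (fun q => fFin T q.1 i) (fun t => fTr T t.1) e

/-- The composed word f_{i₁}(… f_{i_k}(#) …) for a sequence of indices. -/
def seqWord [DecidableEq Q] (T : BiSST S Γ Q X) (i : Bool) (l : List (IdxEl T)) :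
    List (ALet X Γ Q) :=
  l.foldr (fun e w => mapply (idxMorph T i e) w) [Sum.inr ()]

/-- A sequence over Q_f ∪ δ is valid if it consists of the transitions of a
    run of T from the initial state, followed by the final state this run
    reaches. -/
def ValidSeq (T : BiSST S Γ Q X) (l : List (IdxEl T)) : Prop :=
  ∃ (u : List S) (ts : List (Q × S × Q)) (q : Q) (hq : T.final q),
    BiRunL T T.init u q ts ∧
    l.map (Sum.map Subtype.val Subtype.val) =
      ts.map Sum.inr ++ [Sum.inl q]

end SSTPaper

/-!
Subscripts travel backwards along runs: `f_t` erases every letter not subscripted by the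
target of `t` and subscripts its output by the source of `t`, while `f_q^i` turns the bare `#`
into letters subscripted by `q` and erases everything else. Hence a letter `α_q` surviving in
`f_{i₁}(… f_{i_k}(#) …)` certifies that `i₁ … i_k` is a run from `q` followed by the final state
it reaches, and `f_{q₀}` keeps only letters subscripted by `q₀`.
-/

namespace SSTPaper

variable {S Γ Q X : Type}

def ValidSeqFrom (T : BiSST S Γ Q X) (p : Q) (l : List (IdxEl T)) : Prop :=
  ∃ (u : List S) (ts : List (Q × S × Q)) (q : Q) (_ : T.final q),
    BiRunL T p u q ts ∧
    l.map (Sum.map Subtype.val Subtype.val) = ts.map Sum.inr ++ [Sum.inl q]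

theorem validSeqFrom_final {T : BiSST S Γ Q X} {q : Q} (hq : T.final q) :
    ValidSeqFrom T q [Sum.inl ⟨q, hq⟩] :=
  ⟨[], [], q, hq, BiRunL.nil q, rfl⟩

theorem ValidSeqFrom.cons {T : BiSST S Γ Q X} {t : Q × S × Q}
    (ht : T.delta t.1 t.2.1 t.2.2) {l : List (IdxEl T)} (h : ValidSeqFrom T t.2.2 l) :
    ValidSeqFrom T t.1 (Sum.inr ⟨t, ht⟩ :: l) := by
  obtain ⟨u, ts, q, hq, hrun, hl⟩ := h
  exact ⟨t.2.1 :: u, t :: ts, q, hq, BiRunL.cons ht hrun, congrArg (Sum.inr t :: ·) hl⟩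

theorem mem_fFin {T : BiSST S Γ Q X} {q : Q} {i : Bool} {a b : ALet X Γ Q}
    (h : a ∈ fFin T q i b) : b = Sum.inr () ∧ ∃ α, a = Sum.inl (α, q) := by
  rcases b with _ | ⟨⟩
  · simp [fFin] at h
  · simp only [fFin, subscr, List.mem_cons, List.mem_map] at h
    rcases h with rfl | ⟨x, -, rfl⟩ <;> exact ⟨rfl, _, rfl⟩

theorem mem_fTr [DecidableEq Q] {T : BiSST S Γ Q X} {t : Q × S × Q} {a b : ALet X Γ Q}
    (h : a ∈ fTr T t b) : ∃ α β, b = Sum.inl (α, t.2.2) ∧ a = Sum.inl (β, t.1) := by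
  rcases b with ⟨x | g | _ | _, p⟩ | _ <;> simp only [fTr, List.not_mem_nil] at h
  all_goals
    split_ifs at h with hp
    · subst hp
      simp only [subscr, List.mem_map, List.mem_singleton] at h
      aesop
    · simp at h

theorem exists_init_of_fOut_ne_nil [DecidableEq Q] {T : BiSST S Γ Q X} {a : ALet X Γ Q}
    (h : fOut T a ≠ []) : ∃ α, a = Sum.inl (α, T.init) := by
  rcases a with ⟨x | g | _, p⟩ | _ <;> simp only [fOut, ne_eq, not_true_eq_false] at h
  split_ifs at h with hp
  · exact ⟨_, by rw [hp]⟩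
  · exact absurd rfl h

section seqWord

variable [DecidableEq Q] {T : BiSST S Γ Q X} {i : Bool}

theorem seqWord_cons (e : IdxEl T) (l : List (IdxEl T)) :
    seqWord T i (e :: l) = mapply (idxMorph T i e) (seqWord T i l) :=
  rfl

theorem mem_idxMorph {e : IdxEl T} {a b : ALet X Γ Q} (h : a ∈ idxMorph T i e b) :
    ∃ α q, a = Sum.inl (α, q) := by
  rcases e with ⟨q, _⟩ | ⟨t, _⟩
  · obtain ⟨-, α, rfl⟩ := mem_fFin h
    exact ⟨α, q, rfl⟩
  · obtain ⟨-, β, -, rfl⟩ := mem_fTr h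
    exact ⟨β, t.1, rfl⟩

theorem eq_nil_of_hash_mem_seqWord {l : List (IdxEl T)}
    (h : Sum.inr () ∈ seqWord T i l) : l = [] := by
  cases l with
  | nil => rfl
  | cons e l =>
    rw [seqWord_cons, mapply, List.mem_flatMap] at h
    obtain ⟨b, -, hb⟩ := h
    obtain ⟨α, q, hq⟩ := mem_idxMorph hb
    cases hq

theorem validSeqFrom_of_mem_seqWord {l : List (IdxEl T)} {α : BaseL X Γ} {q : Q}
    (h : Sum.inl (α, q) ∈ seqWord T i l) : ValidSeqFrom T q l := by
  induction l generalizing α q with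
  | nil => simp [seqWord] at h
  | cons e l ih =>
    rw [seqWord_cons, mapply, List.mem_flatMap] at h
    obtain ⟨b, hb, hab⟩ := h
    rcases e with ⟨q', hq'⟩ | ⟨t, ht⟩
    · obtain ⟨rfl, _, hα⟩ := mem_fFin hab
      cases hα
      cases eq_nil_of_hash_mem_seqWord hb
      exact validSeqFrom_final hq'
    · obtain ⟨β, _, rfl, hα⟩ := mem_fTr hab
      cases hα
      exact (ih hb).cons ht

end seqWord

/-- For every non-valid sequence over Q_f ∪ δ, the composed morphisms
    collapse to the empty word. -/
theorem reduction_invalid_collapse {S Γ Q X : Type} [DecidableEq Q]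
    (T : BiSST S Γ Q X) :
    ∀ l : List (IdxEl T), ¬ ValidSeq T l →
      ∀ i : Bool, mapply (fOut T) (seqWord T i l) = [] := by
  intro l hl i
  refine List.flatMap_eq_nil_iff.2 fun a ha => ?_
  by_contra hout
  obtain ⟨α, rfl⟩ := exists_init_of_fOut_ne_nil hout
  exact hl (validSeqFrom_of_mem_seqWord ha)

end SSTPaper
end

section
/- For any biSST T, the HDT0L instance I_T constructed from T (with axiom words v = w = #, pairs (f_q^1, f_q^2) for final states q, pairs (f_t, f_t) for transitions t, and final pair (f_{q0}, f_{q0})) is valid if and only if T is diagonal. -/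
/-!
Starting from `#`, the morphisms of `I_T` can only produce `#`, `ε`, or a word
`$_p · subscript_p(σ(π_i F(q)))` with `σ` the substitution of a run of `T` from `p` to a final
state `q`: a final-state morphism `f_q^i` opens such a word, and a transition morphism `f_t`
extends the run backwards by `t` when the target of `t` is the current subscript and erases the
word otherwise. Every run arises in this way, and the two sides differ only in `i`. Finally
`f_{q₀}` keeps just the `Γ`-letters of words subscripted by the initial state, i.e. it returns
the two outputs of an accepting run; hence both sides agree on every sequence iff `T` is diagonal.
-/

namespace SSTPaper

variable {S Γ Q X : Type}

lemma ext_flatMap {A : Type} (σ : X → List (Γ ⊕ X)) (g : A → List (Γ ⊕ X)) (w : List A) :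
    ext σ (w.flatMap g) = w.flatMap (fun a => ext σ (g a)) := by
  simp [ext, List.flatMap_assoc]

lemma flatMap_idSubst (xs : List X) : xs.flatMap (idSubst (Γ := Γ)) = xs.map Sum.inr :=
  List.flatMap_pure_eq_map Sum.inr xs

def liftLetter (p : Q) (l : Γ ⊕ X) : ALet X Γ Q :=
  subscr p (Sum.elim (fun g => Sum.inr (Sum.inl g)) Sum.inl l)

def encodeWord (p : Q) (w : List (Γ ⊕ X)) : List (ALet X Γ Q) :=
  subscr p (Sum.inr (Sum.inr false)) :: w.map (liftLetter p)

lemma mapply_encodeWord {B : Type} (f : ALet X Γ Q → List B) (p : Q) (w : List (Γ ⊕ X)) :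
    mapply f (encodeWord p w) =
      f (subscr p (Sum.inr (Sum.inr false))) ++ w.flatMap (fun l => f (liftLetter p l)) := by
  simp [mapply, encodeWord, List.flatMap_map]

lemma mapply_fFin_sharp (T : BiSST S Γ Q X) (q : Q) (i : Bool) :
    mapply (fFin T q i) [Sum.inr ()] =
      encodeWord q ((cond i (T.out q).1 (T.out q).2).map Sum.inr) := by
  simp [mapply, fFin, encodeWord, liftLetter]

lemma mapply_fFin_encodeWord (T : BiSST S Γ Q X) (q p : Q) (i : Bool) (w : List (Γ ⊕ X)) :
    mapply (fFin T q i) (encodeWord p w) = [] := by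
  have hl : ∀ l : Γ ⊕ X, fFin T q i (liftLetter p l) = [] := by
    rintro (_ | _) <;> rfl
  have hd : fFin T q i (subscr p (Sum.inr (Sum.inr false))) = [] := rfl
  simp [mapply_encodeWord, hd, hl]

section Decidable

variable [DecidableEq Q] (T : BiSST S Γ Q X)

lemma mapply_fTr_sharp (t : Q × S × Q) : mapply (fTr T t) [Sum.inr ()] = [] := rfl

lemma fTr_liftLetter (t : Q × S × Q) (l : Γ ⊕ X) :
    fTr T t (liftLetter t.2.2 l) =
      (Sum.elim (fun g => [Sum.inl g]) (T.rho t.1 t.2.1 t.2.2) l).map (liftLetter t.1) := by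
  cases l with
  | inl g => simp [liftLetter, fTr, subscr]
  | inr x => simp only [liftLetter, fTr, subscr, Sum.elim_inr]; rfl

lemma mapply_fTr_encodeWord (t : Q × S × Q) (w : List (Γ ⊕ X)) :
    mapply (fTr T t) (encodeWord t.2.2 w) = encodeWord t.1 (ext (T.rho t.1 t.2.1 t.2.2) w) := by
  have hd : fTr T t (subscr t.2.2 (Sum.inr (Sum.inr false))) =
      [subscr t.1 (Sum.inr (Sum.inr false))] := by
    simp [fTr, subscr]
  rw [mapply_encodeWord, hd]
  simp [fTr_liftLetter, encodeWord, ext, List.map_flatMap]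

lemma mapply_fTr_encodeWord_of_ne {p : Q} (t : Q × S × Q) (h : p ≠ t.2.2)
    (w : List (Γ ⊕ X)) :
    mapply (fTr T t) (encodeWord p w) = [] := by
  have hl : ∀ l : Γ ⊕ X, fTr T t (liftLetter p l) = [] := by
    rintro (_ | _) <;> simp [liftLetter, fTr, subscr, h]
  have hd : fTr T t (subscr p (Sum.inr (Sum.inr false))) = [] := by simp [fTr, subscr, h]
  simp [mapply_encodeWord, hd, hl]

lemma mapply_fOut_encodeWord_init (σ : X → List (Γ ⊕ X)) (xs : List X) :
    mapply (fOut T) (encodeWord T.init (xs.flatMap σ)) = evalOut σ xs := by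
  have hl : ∀ l : Γ ⊕ X,
      fOut T (liftLetter T.init l) = (Sum.elim some (fun _ => none) l).toList := by
    rintro (_ | _) <;> simp [liftLetter, fOut, subscr]
  have hd : fOut T (subscr T.init (Sum.inr (Sum.inr false)) : ALet X Γ Q) = [] := rfl
  simp [mapply_encodeWord, evalOut, hd, hl, List.filterMap_eq_flatMap_toList]

lemma mapply_fOut_encodeWord_of_ne {p : Q} (h : p ≠ T.init) (w : List (Γ ⊕ X)) :
    mapply (fOut T) (encodeWord p w) = [] := by
  have hl : ∀ l : Γ ⊕ X, fOut T (liftLetter p l) = [] := by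
    rintro (_ | _) <;> simp [liftLetter, fOut, subscr, h]
  have hd : fOut T (subscr p (Sum.inr (Sum.inr false)) : ALet X Γ Q) = [] := rfl
  simp [mapply_encodeWord, hd, hl]

lemma seqWord_final_cons (q : {q : Q // T.final q}) (i : Bool) (l : List (IdxEl T)) :
    seqWord T i (Sum.inl q :: l) = mapply (fFin T q.1 i) (seqWord T i l) := rfl

lemma seqWord_transition_cons (t : {t : Q × S × Q // T.delta t.1 t.2.1 t.2.2}) (i : Bool)
    (l : List (IdxEl T)) :
    seqWord T i (Sum.inr t :: l) = mapply (fTr T t.1) (seqWord T i l) := rfl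

lemma seqWord_final_singleton (q : {q : Q // T.final q}) (i : Bool) :
    seqWord T i [Sum.inl q] = encodeWord q.1 ((cond i (T.out q.1).1 (T.out q.1).2).map Sum.inr) :=
  mapply_fFin_sharp T q.1 i

lemma seqWord_transition_cons_encodeWord (t : {t : Q × S × Q // T.delta t.1 t.2.1 t.2.2})
    {l : List (IdxEl T)} {i : Bool} {σ : X → List (Γ ⊕ X)} {xs : List X}
    (h : seqWord T i l = encodeWord t.1.2.2 (xs.flatMap σ)) :
    seqWord T i (Sum.inr t :: l) =
      encodeWord t.1.1 (xs.flatMap (comp (T.rho t.1.1 t.1.2.1 t.1.2.2) σ)) := by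
  rw [seqWord_transition_cons, h, mapply_fTr_encodeWord, ext_flatMap]
  rfl

lemma exists_seqWord_of_biRun {p q : Q} {u : List S} {σ : X → List (Γ ⊕ X)}
    (hr : BiRun T p u q σ) (hq : T.final q) :
    ∃ l : List (IdxEl T), ∀ i : Bool,
      seqWord T i l = encodeWord p ((cond i (T.out q).1 (T.out q).2).flatMap σ) := by
  induction hr with
  | nil q =>
    exact ⟨[Sum.inl ⟨q, hq⟩], fun i => by
      rw [seqWord_final_singleton, flatMap_idSubst]⟩
  | @cons p p' q a u σ hδ _ ih =>
    obtain ⟨l, hl⟩ := ih hq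
    exact ⟨Sum.inr ⟨(p, a, p'), hδ⟩ :: l,
      fun i => seqWord_transition_cons_encodeWord T _ (hl i)⟩

lemma seqWord_trichotomy (l : List (IdxEl T)) :
    (∀ i : Bool, seqWord T i l = [Sum.inr ()]) ∨
    (∀ i : Bool, seqWord T i l = []) ∨
    ∃ (p q : Q) (σ : X → List (Γ ⊕ X)) (u : List S), BiRun T p u q σ ∧ T.final q ∧
      ∀ i : Bool, seqWord T i l = encodeWord p ((cond i (T.out q).1 (T.out q).2).flatMap σ) := by
  induction l with
  | nil => exact Or.inl fun _ => rfl
  | cons e l ih =>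
    rcases ih with hsharp | hnil | ⟨p, q, σ, u, hr, hq, hrun⟩
    · rcases e with qf | t
      · refine Or.inr (Or.inr ⟨qf.1, qf.1, idSubst, [], BiRun.nil qf.1, qf.2, fun i => ?_⟩)
        rw [seqWord_final_cons, hsharp, mapply_fFin_sharp, flatMap_idSubst]
      · exact Or.inr (Or.inl fun i => by
          rw [seqWord_transition_cons, hsharp, mapply_fTr_sharp])
    · exact Or.inr (Or.inl fun i => congrArg (mapply (idxMorph T i e)) (hnil i))
    · rcases e with qf | t
      · exact Or.inr (Or.inl fun i => by
          rw [seqWord_final_cons, hrun]; exact mapply_fFin_encodeWord T qf.1 p i _)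
      · by_cases hp : p = t.1.2.2
        · subst hp
          exact Or.inr (Or.inr ⟨_, q, _, _, BiRun.cons t.2 hr, hq,
            fun i => seqWord_transition_cons_encodeWord T t (hrun i)⟩)
        · exact Or.inr (Or.inl fun i => by
            rw [seqWord_transition_cons, hrun]; exact mapply_fTr_encodeWord_of_ne T t.1 hp _)

end Decidable

/-- The HDT0L instance I_T built from a biSST T is valid iff T is diagonal. -/
theorem reduction_valid_iff_diagonal {S Γ Q X : Type} [DecidableEq Q]
    (T : BiSST S Γ Q X) :
    (∀ l : List (IdxEl T),
        mapply (fOut T) (seqWord T true l) = mapply (fOut T) (seqWord T false l)) ↔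
      T.Diagonal := by
  constructor
  · rintro hvalid u o₁ o₂ ⟨q, σ, hr, hq, h₁, h₂⟩
    obtain ⟨l, hl⟩ := exists_seqWord_of_biRun T hr hq
    have := hvalid l
    rw [hl, hl, mapply_fOut_encodeWord_init, mapply_fOut_encodeWord_init] at this
    exact h₁.trans (this.trans h₂.symm)
  · intro hdiag l
    rcases seqWord_trichotomy T l with h | h | ⟨p, q, σ, u, hr, hq, h⟩
    · rw [h, h]
    · rw [h, h]
    · rw [h, h]
      by_cases hp : p = T.init
      · subst hp
        rw [mapply_fOut_encodeWord_init, mapply_fOut_encodeWord_init]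
        exact hdiag u _ _ ⟨q, σ, hr, hq, rfl, rfl⟩
      · rw [mapply_fOut_encodeWord_of_ne T hp, mapply_fOut_encodeWord_of_ne T hp]

end SSTPaper
end
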